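/- Let n ≥ 2 and let F be a field of characteristic 0. On the polynomial ring F[x_1,…,x_{n-1}] define the n-ary bracket [f_1,…,f_n] = det of the n×n matrix whose first row is (f_1,…,f_n) and whose (i+1)-st row is (∂f_1/∂x_i,…,∂f_n/∂x_i) for i = 1,…,n−1. Then this bracket satisfies the Filippov–Jacobi identity: for all g_1,…,g_{n-1}, f_1,…,f_n ∈ F[x_1,…,x_{n-1}], [g_1,…,g_{n-1},[f_1,…,f_n]] = Σ_{k=1}^n [f_1,…,f_{k-1},[g_1,…,g_{n-1},f_k],f_{k+1},…,f_n]. (This is the n-Lie algebra structure underlying W^n.) -/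

import Mathlib

open MvPolynomial

/-- Append an element at the end of a family indexed by `Fin (n-1)`,
producing a family indexed by `Fin n` (the last slot gets the new element). -/
def snocFam {α : Type*} {n : ℕ} (g : Fin (n - 1) → α) (x : α) : Fin n → α :=
  fun i => if h : (i : ℕ) < n - 1 then g ⟨i, h⟩ else x

/-- The `n`-ary bracket on `F[x_1,…,x_{n-1}]` underlying the `n`-Lie algebra `W^n`:
the determinant of the `n×n` matrix whose first row is `(f_1,…,f_n)` and whose
`(i+1)`-st row is `(∂f_1/∂x_i, …, ∂f_n/∂x_i)` for `i = 1,…,n-1`. -/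
noncomputable def wBracket (F : Type*) [Field F] (n : ℕ)
    (f : Fin n → MvPolynomial (Fin (n - 1)) F) : MvPolynomial (Fin (n - 1)) F :=
  Matrix.det (Matrix.of fun (i : Fin n) (j : Fin n) =>
    if h : (i : ℕ) = 0 then f j
    else pderiv (⟨(i : ℕ) - 1, by have := i.isLt; omega⟩ : Fin (n - 1)) (f j))

/-!
Put `m = n - 1`, fix `g` and let `D a = [g_1, …, g_m, a]`. Expanding along the last row, `D a = c ⬝ᵥ jet a`
where `jet a = (a, ∂_1 a, …, ∂_m a)` and `c` is the vector of cofactors of that row; thus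
`D = c_0 + X` with `X = ∑ c_{i+1} ∂_i` a derivation. Since the `∂_i` commute,
`jet (D f) = (c_0 • 1 + ∂c) *ᵥ jet f + X (jet f)` with `(∂c)_{i+1,q} = ∂_i c_q`, so
replacing each row of the determinant `[f_1, …, f_n]` in turn by `jet (D f_k)` and summing gives
`trace (c_0 • 1 + ∂c) • [f] + X [f] = ((m + 1) c_0 + ∑ ∂_i c_{i+1}) • [f] + X [f]`.
This is `D [f] = c_0 [f] + X [f]` exactly when `∑ ∂_i c_{i+1} = -m c_0`. That divergence identity
comes from differentiating each cofactor row by row: the second derivatives `∂_i ∂_j g_k` are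
symmetric in `i, j` while the determinant is alternating, so they cancel, and what remains is `-c_0`
for each of the `m` rows `jet g_k`.
-/

open Matrix

theorem sum_sum_mul_eq_zero_of_symm_of_alt {ι A : Type*} [Fintype ι] [CommRing A]
    (s a : ι → ι → A) (hs : ∀ i j, s i j = s j i) (ha : ∀ i j, a i j = -a j i)
    (ha' : ∀ i, a i i = 0) : ∑ i, ∑ j, s i j * a i j = 0 := by
  rw [← Fintype.sum_prod_type']
  refine Finset.sum_ninvolution Prod.swap (fun p => ?_) (fun ⟨i, j⟩ hp h => ?_) (by simp)
    (by simp)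
  · rw [Prod.fst_swap, Prod.snd_swap, hs, ha]
    ring
  · obtain rfl : i = j := congrArg Prod.fst h.symm
    exact hp (by simp [ha'])

namespace Matrix

variable {n A : Type*} [Fintype n] [DecidableEq n] [CommRing A]

theorem det_updateRow_eq_sum_mul_adjugate (M : Matrix n n A) (k : n) (v : n → A) :
    (M.updateRow k v).det = ∑ p, v p * M.adjugate p k := by
  rw [← det_transpose, ← updateCol_transpose, ← cramer_apply, cramer_eq_adjugate_mulVec,
    ← adjugate_transpose]
  simp [mulVec, dotProduct, mul_comm]

theorem det_updateRow_eq_sum_mul_det_updateRow_single (M : Matrix n n A) (k : n) (v : n → A) :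
    (M.updateRow k v).det = ∑ p, v p * (M.updateRow k (Pi.single p 1)).det := by
  rw [det_updateRow_eq_sum_mul_adjugate]
  simp_rw [adjugate_apply]

theorem sum_det_updateRow_mulVec (M B : Matrix n n A) :
    ∑ k, (M.updateRow k (B *ᵥ M k)).det = B.trace * M.det := by
  calc ∑ k, (M.updateRow k (B *ᵥ M k)).det
      = ∑ p, ∑ q, B p q * (M.adjugate * M) p q := by
        simp only [det_updateRow_eq_sum_mul_adjugate, mulVec, dotProduct, mul_apply,
          Finset.sum_mul, Finset.mul_sum]
        rw [Finset.sum_comm]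
        refine Finset.sum_congr rfl fun p _ => ?_
        rw [Finset.sum_comm]
        exact Finset.sum_congr rfl fun q _ => Finset.sum_congr rfl fun k _ => by ring
    _ = B.trace * M.det := by
        simp [adjugate_mul, one_apply, trace, Finset.sum_mul]

theorem det_updateRow_updateRow_swap (M : Matrix n n A) {i j : n} (hij : i ≠ j)
    (u v : n → A) :
    ((M.updateRow i u).updateRow j v).det = -((M.updateRow i v).updateRow j u).det := by
  have h := det_permute (Equiv.swap i j) ((M.updateRow i u).updateRow j v)
  have hswap : ((M.updateRow i u).updateRow j v).submatrix (Equiv.swap i j) id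
      = (M.updateRow i v).updateRow j u := by
    ext a b
    rcases eq_or_ne a i with rfl | hai
    · simp [updateRow_apply, hij]
    rcases eq_or_ne a j with rfl | haj
    · simp [updateRow_apply, hij]
    · simp [updateRow_apply, Equiv.swap_apply_of_ne_of_ne hai haj, hai, haj]
  rw [hswap, Equiv.Perm.sign_swap hij] at h
  simp [h]

end Matrix

namespace Derivation

variable {R A : Type*} [CommRing R] [CommRing A] [Algebra R A] (D : Derivation R A A)

theorem leibniz_finset_prod {ι : Type*} [DecidableEq ι] (s : Finset ι) (f : ι → A) :
    D (∏ i ∈ s, f i) = ∑ k ∈ s, ∏ i ∈ s, Function.update f k (D (f k)) i := by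
  induction s using Finset.induction_on with
  | empty => simp
  | insert a s ha ih =>
    have hupd : ∀ k ∈ s, ∏ i ∈ insert a s, Function.update f k (D (f k)) i
        = f a * ∏ i ∈ s, Function.update f k (D (f k)) i := fun k hk => by
      rw [Finset.prod_insert ha, Function.update_of_ne (ne_of_mem_of_not_mem hk ha).symm]
    rw [Finset.prod_insert ha, leibniz, ih, Finset.sum_insert ha, Finset.sum_congr rfl hupd,
      ← Finset.mul_sum, Finset.prod_insert ha, Function.update_self,
      Finset.prod_congr rfl fun i hi => Function.update_of_ne (ne_of_mem_of_not_mem hi ha) _ f]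
    simp only [smul_eq_mul]
    ring

theorem map_det {n : Type*} [Fintype n] [DecidableEq n] (M : Matrix n n A) :
    D M.det = ∑ k, (M.updateRow k fun j => D (M k j)).det := by
  have hdet : ∀ N : Matrix n n A, N.det = ∑ σ : Equiv.Perm n,
      (Equiv.Perm.sign σ : ℤ) • ∏ i, N i (σ i) := fun N => by
    rw [← det_transpose, det_apply]
    rfl
  simp_rw [hdet, map_sum, map_zsmul, leibniz_finset_prod]
  rw [Finset.sum_comm]
  refine Finset.sum_congr rfl fun σ _ => ?_
  rw [Finset.smul_sum]
  refine Finset.sum_congr rfl fun k _ => ?_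
  congr 1
  refine Finset.prod_congr rfl fun i _ => ?_
  rcases eq_or_ne i k with rfl | hik <;> simp [updateRow_apply, *]

end Derivation

theorem MvPolynomial.pderiv_pderiv_comm {σ R : Type*} [CommRing R] (i j : σ)
    (p : MvPolynomial σ R) : pderiv i (pderiv j p) = pderiv j (pderiv i p) := by
  classical
  have h : ⁅pderiv i, pderiv j⁆ = (0 : Derivation R (MvPolynomial σ R) (MvPolynomial σ R)) :=
    MvPolynomial.derivation_ext fun k => by
      rw [Derivation.commutator_apply]
      simp [pderiv_X, Pi.single_apply, apply_ite]
  rw [← sub_eq_zero, ← Derivation.commutator_apply, h, Derivation.zero_apply]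

section Jet

variable {R A : Type*} [CommRing R] [CommRing A] [Algebra R A] {m : ℕ}
  (d : Fin m → Derivation R A A)

def jet (a : A) : Fin (m + 1) → A := Fin.cons a fun i => d i a

@[simp] theorem jet_zero (a : A) : jet d a 0 = a := rfl

@[simp] theorem jet_succ (a : A) (i : Fin m) : jet d a i.succ = d i a := rfl

def jetMatrix (f : Fin (m + 1) → A) : Matrix (Fin (m + 1)) (Fin (m + 1)) A :=
  Matrix.of fun k => jet d (f k)

def jetBracket (f : Fin (m + 1) → A) : A := (jetMatrix d f).det

theorem jetMatrix_update (f : Fin (m + 1) → A) (k : Fin (m + 1)) (a : A) :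
    jetMatrix d (Function.update f k a) = (jetMatrix d f).updateRow k (jet d a) := by
  ext i j
  rcases eq_or_ne i k with rfl | hik <;> simp [jetMatrix, updateRow_apply, *]

theorem jetMatrix_snoc_castSucc (g : Fin m → A) (a : A) (k : Fin m) :
    jetMatrix d (Fin.snoc g a) k.castSucc = jet d (g k) :=
  congrArg (jet d) (Fin.snoc_castSucc ..)

def vectorField (c : Fin (m + 1) → A) : Derivation R A A := ∑ i, c i.succ • d i

theorem vectorField_apply (c : Fin (m + 1) → A) (a : A) :
    vectorField d c a = ∑ i, c i.succ * d i a := by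
  rw [vectorField, ← Derivation.coeFnAddMonoidHom_apply, map_sum, Finset.sum_apply]
  simp [Derivation.coeFnAddMonoidHom_apply]

theorem dotProduct_jet (c : Fin (m + 1) → A) (a : A) :
    c ⬝ᵥ jet d a = c 0 * a + vectorField d c a := by
  simp [dotProduct, Fin.sum_univ_succ, vectorField_apply]

def derivMatrix (c : Fin (m + 1) → A) : Matrix (Fin (m + 1)) (Fin (m + 1)) A :=
  Matrix.of (Fin.cons 0 fun i => d i ∘ c)

theorem trace_derivMatrix (c : Fin (m + 1) → A) :
    (derivMatrix d c).trace = ∑ i, d i (c i.succ) := by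
  simp [trace, derivMatrix, Fin.sum_univ_succ]

variable {d}

theorem jet_dotProduct_jet (hd : ∀ i j a, d i (d j a) = d j (d i a)) (c : Fin (m + 1) → A)
    (a : A) : jet d (c ⬝ᵥ jet d a)
      = (c 0 • 1 + derivMatrix d c) *ᵥ jet d a + fun p => vectorField d c (jet d a p) := by
  rw [add_mulVec, smul_mulVec, one_mulVec]
  ext p
  induction p using Fin.cases with
  | zero => simp [dotProduct_jet, derivMatrix, mulVec]
  | succ j =>
    simp only [jet_succ, dotProduct, Fin.sum_univ_succ, map_add, map_sum, Derivation.leibniz,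
      smul_eq_mul, jet_zero, Pi.add_apply, Pi.smul_apply, derivMatrix, mulVec, of_apply,
      Fin.cons_succ, Function.comp_apply, vectorField_apply, hd j, Finset.sum_add_distrib]
    simp only [mul_comm (d _ a)]
    ring

theorem dotProduct_jet_jetBracket (hd : ∀ i j a, d i (d j a) = d j (d i a))
    (c : Fin (m + 1) → A) (hc : (m : A) * c 0 + ∑ i, d i (c i.succ) = 0)
    (f : Fin (m + 1) → A) :
    c ⬝ᵥ jet d (jetBracket d f)
      = ∑ k, jetBracket d (Function.update f k (c ⬝ᵥ jet d (f k))) := by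
  set M := jetMatrix d f
  set C := c 0 • 1 + derivMatrix d c
  have hrow : ∀ k, jet d (c ⬝ᵥ jet d (f k)) = C *ᵥ M k + fun j => vectorField d c (M k j) :=
    fun k => jet_dotProduct_jet hd c (f k)
  calc c ⬝ᵥ jet d M.det = c 0 * M.det + vectorField d c M.det := dotProduct_jet d c _
    _ = C.trace * M.det + vectorField d c M.det := by
      rw [trace_add, trace_smul, trace_one, trace_derivMatrix, Fintype.card_fin]
      push_cast
      linear_combination -(M.det * hc)
    _ = ∑ k, (M.updateRow k (C *ᵥ M k)).det
          + ∑ k, (M.updateRow k fun j => vectorField d c (M k j)).det := by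
      rw [sum_det_updateRow_mulVec, Derivation.map_det]
    _ = ∑ k, jetBracket d (Function.update f k (c ⬝ᵥ jet d (f k))) := by
      simp only [jetBracket, jetMatrix_update, hrow, det_updateRow_add, Finset.sum_add_distrib]
      rfl

variable (d)

def jetCofactor (g : Fin m → A) (q : Fin (m + 1)) : A :=
  ((jetMatrix d (Fin.snoc g 0)).updateRow (Fin.last m) (Pi.single q 1)).det

theorem jetBracket_snoc (g : Fin m → A) (a : A) :
    jetBracket d (Fin.snoc g a) = jetCofactor d g ⬝ᵥ jet d a := by
  rw [jetBracket, ← Fin.update_snoc_last (x := 0), jetMatrix_update,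
    det_updateRow_eq_sum_mul_det_updateRow_single, dotProduct]
  exact Finset.sum_congr rfl fun q _ => mul_comm _ _

variable {d}

theorem sum_det_updateRow_map_jet (hd : ∀ i j a, d i (d j a) = d j (d i a)) (g : Fin m → A)
    (k : Fin m) :
    ∑ i, (((jetMatrix d (Fin.snoc g 0)).updateRow (Fin.last m) (Pi.single i.succ 1)).updateRow
      k.castSucc fun q => d i (jet d (g k) q)).det = -jetCofactor d g 0 := by
  set ψ : (Fin (m + 1) → A) → (Fin (m + 1) → A) → A := fun u v =>
    (((jetMatrix d (Fin.snoc g 0)).updateRow (Fin.last m) v).updateRow k.castSucc u).det with hψ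
  have hk : k.castSucc ≠ Fin.last m := (Fin.castSucc_lt_last k).ne
  have alt : ∀ u, ψ u u = 0 := fun u =>
    det_zero_of_row_eq hk (by rw [updateRow_self, updateRow_ne hk.symm, updateRow_self])
  have swap : ∀ u v, ψ u v = -ψ v u := fun u v =>
    det_updateRow_updateRow_swap _ hk.symm v u
  have expand : ∀ u v, ψ u v = ∑ q, u q * ψ (Pi.single q 1) v := fun u v =>
    det_updateRow_eq_sum_mul_det_updateRow_single _ _ u
  have hsym : ∑ i, ∑ j, d i (d j (g k)) * ψ (Pi.single j.succ 1) (Pi.single i.succ 1) = 0 :=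
    sum_sum_mul_eq_zero_of_symm_of_alt _ _ (fun i j => hd i j _) (fun i j => swap _ _)
      (fun i => alt _)
  have hcof : ψ (jet d (g k)) (Pi.single 0 1) = jetCofactor d g 0 := by
    have hrow : jet d (g k) = ((jetMatrix d (Fin.snoc g 0)).updateRow (Fin.last m)
        (Pi.single 0 1)) k.castSucc := by
      rw [updateRow_ne hk, jetMatrix_snoc_castSucc]
    rw [hψ]
    dsimp only
    rw [hrow, updateRow_eq_self]
    rfl
  show ∑ i, ψ (fun q => d i (jet d (g k) q)) (Pi.single i.succ 1) = _
  calc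
    _ = ∑ i, d i (g k) * ψ (Pi.single 0 1) (Pi.single i.succ 1)
        + ∑ i, ∑ j, d i (d j (g k)) * ψ (Pi.single j.succ 1) (Pi.single i.succ 1) := by
      rw [← Finset.sum_add_distrib]
      refine Finset.sum_congr rfl fun i _ => ?_
      rw [expand, Fin.sum_univ_succ]
      simp
    _ = -∑ i : Fin m, jet d (g k) i.succ * ψ (Pi.single i.succ 1) (Pi.single 0 1) := by
      simp [hsym, swap (Pi.single 0 1)]
    _ = -jetCofactor d g 0 := by
      rw [← hcof, expand (jet d (g k)), Fin.sum_univ_succ, alt]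
      simp

theorem jetCofactor_divergence (hd : ∀ i j a, d i (d j a) = d j (d i a)) (g : Fin m → A) :
    (m : A) * jetCofactor d g 0 + ∑ i, d i (jetCofactor d g i.succ) = 0 := by
  have hrow : ∀ i, d i (jetCofactor d g i.succ) = ∑ k : Fin m,
      (((jetMatrix d (Fin.snoc g 0)).updateRow (Fin.last m) (Pi.single i.succ 1)).updateRow
        k.castSucc fun q => d i (jet d (g k) q)).det := fun i => by
    rw [jetCofactor, Derivation.map_det, Fin.sum_univ_castSucc]
    have hlast : ∀ j, d i (Pi.single (M := fun _ => A) i.succ 1 j) = 0 := fun j => by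
      rcases eq_or_ne j i.succ with rfl | hj <;> simp [*]
    rw [det_eq_zero_of_row_eq_zero (Fin.last m) (by simp [hlast]), add_zero]
    simp [jetMatrix_snoc_castSucc]
  rw [Finset.sum_congr rfl fun i _ => hrow i, Finset.sum_comm]
  simp [sum_det_updateRow_map_jet hd]

theorem jetBracket_filippov (hd : ∀ i j a, d i (d j a) = d j (d i a)) (g : Fin m → A)
    (f : Fin (m + 1) → A) :
    jetBracket d (Fin.snoc g (jetBracket d f))
      = ∑ k, jetBracket d (Function.update f k (jetBracket d (Fin.snoc g (f k)))) := by
  simp only [jetBracket_snoc]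
  exact dotProduct_jet_jetBracket hd _ (jetCofactor_divergence hd g) f

end Jet

theorem snocFam_eq_snoc {α : Type*} {m : ℕ} (g : Fin m → α) (x : α) :
    snocFam (n := m + 1) g x = Fin.snoc g x := by
  funext i
  simp only [snocFam, Fin.snoc, cast_eq]
  rfl

theorem wBracket_eq_jetBracket (F : Type*) [Field F] (m : ℕ)
    (f : Fin (m + 1) → MvPolynomial (Fin m) F) :
    wBracket F (m + 1) f = jetBracket pderiv f := by
  rw [wBracket, jetBracket, ← Matrix.det_transpose (jetMatrix _ _)]
  congr 1
  refine Matrix.ext fun i j => ?_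
  induction i using Fin.cases with
  | zero => rfl
  | succ i => simp [jetMatrix, jet]

theorem wBracket_filippov_general (F : Type*) [Field F] (n : ℕ) (hn : 2 ≤ n)
    (g : Fin (n - 1) → MvPolynomial (Fin (n - 1)) F)
    (f : Fin n → MvPolynomial (Fin (n - 1)) F) :
    wBracket F n (snocFam g (wBracket F n f)) =
      ∑ k : Fin n,
        wBracket F n (Function.update f k (wBracket F n (snocFam g (f k)))) := by
  obtain ⟨m, rfl⟩ : ∃ m, n = m + 1 := ⟨n - 1, by omega⟩
  simp only [wBracket_eq_jetBracket, snocFam_eq_snoc]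
  exact jetBracket_filippov pderiv_pderiv_comm g f

/-- The bracket of `W^n` on the polynomial ring `F[x_1,…,x_{n-1}]`
(`char F = 0`, `n ≥ 2`) satisfies the Filippov–Jacobi identity. -/
theorem wBracket_filippov (F : Type*) [Field F] [CharZero F] (n : ℕ) (hn : 2 ≤ n)
    (g : Fin (n - 1) → MvPolynomial (Fin (n - 1)) F)
    (f : Fin n → MvPolynomial (Fin (n - 1)) F) :
    wBracket F n (snocFam g (wBracket F n f)) =
      ∑ k : Fin n,
        wBracket F n (Function.update f k (wBracket F n (snocFam g (f k)))) :=
  wBracket_filippov_general F n hn g f
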